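/- arXiv:1108.0617 — 2 statements merged into one kernel-verified Lean document; each statement's English description precedes it below -/
import Mathlib

section
/- If W is in Sep(X)* (the dual cone of fully separable operators on X₁⊗⋯⊗X_m) and C is in Sep(Y₁,…,Y_m), then W⊗C belongs to Sep(X₁⊗Y₁,…,X_m⊗Y_m)*, the dual cone of fully separable operators with respect to the partition (X₁⊗Y₁,…,X_m⊗Y_m). -/
/-!
For every `S` on `⨂ⱼ (Xⱼ ⊗ Yⱼ)` we have `⟨S, W ⊗ C⟩ = ⟨Tr_Y[S (1 ⊗ C)], W⟩`. The contraction
`Tr_Y[S (1 ⊗ C)]` is additive in `S` and in `C`, and on product operators it factorises: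
`Tr_Y[(⨂ⱼ Pⱼ)(1 ⊗ ⨂ⱼ Qⱼ)] = ⨂ⱼ Tr_{Yⱼ}[Pⱼ (1 ⊗ Qⱼ)]`. Each factor is positive semidefinite: for
`Qⱼ = D* D` it equals `Tr_{Yⱼ}[(1 ⊗ D) Pⱼ (1 ⊗ D)*]`. So `Tr_Y[S (1 ⊗ C)]` is fully separable, and
the pairing is nonnegative because `W ∈ Sep*`.
-/

open scoped Kronecker ComplexOrder

/-- The square root of a positive semidefinite matrix (removed from Mathlib; old definition). -/
noncomputable def Matrix.PosSemidef.sqrt {n 𝕜 : Type*} [Fintype n] [RCLike 𝕜] [DecidableEq n]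
    {A : Matrix n n 𝕜} (hA : A.PosSemidef) : Matrix n n 𝕜 :=
  hA.isHermitian.eigenvectorUnitary.1 * Matrix.diagonal ((↑) ∘ (√·) ∘ hA.isHermitian.eigenvalues) *
    (star hA.isHermitian.eigenvectorUnitary : Matrix n n 𝕜)

/-- Trace norm of a complex matrix: `Tr √(Aᴴ A)`. -/
noncomputable def traceNorm {n : Type*} [Fintype n] [DecidableEq n] (A : Matrix n n ℂ) : ℝ :=
  ((Matrix.posSemidef_conjTranspose_mul_self A).sqrt).trace.re

/-- Spectral (operator) norm of a complex matrix. -/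
noncomputable def opNorm {n : Type*} [Fintype n] [DecidableEq n] (A : Matrix n n ℂ) : ℝ :=
  ‖Matrix.toEuclideanCLM (𝕜 := ℂ) A‖

/-- Tensor product of a family of `m` matrices, as a matrix on the product index. -/
noncomputable def famTensor {m : ℕ} {ι : Fin m → Type*} [∀ j, Fintype (ι j)]
    (M : ∀ j, Matrix (ι j) (ι j) ℂ) : Matrix (∀ j, ι j) (∀ j, ι j) ℂ :=
  fun x y => ∏ j, M j (x j) (y j)

/-- Full separability across the partition `ι 1, …, ι m`. -/
def IsFullySep {m : ℕ} {ι : Fin m → Type*} [∀ j, Fintype (ι j)]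
    (A : Matrix (∀ j, ι j) (∀ j, ι j) ℂ) : Prop :=
  ∃ (k : ℕ) (P : Fin k → ∀ j, Matrix (ι j) (ι j) ℂ),
    (∀ i j, (P i j).PosSemidef) ∧ A = ∑ i, famTensor (P i)

/-- Membership in the dual cone of the fully separable operators. -/
def InSepDual {m : ℕ} {ι : Fin m → Type*} [∀ j, Fintype (ι j)]
    (W : Matrix (∀ j, ι j) (∀ j, ι j) ℂ) : Prop :=
  ∀ S : Matrix (∀ j, ι j) (∀ j, ι j) ℂ, IsFullySep S → 0 ≤ ((S * W).trace).re

/-- Partial trace over the second tensor factor. -/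
noncomputable def ptraceY {ι κ : Type*} [Fintype κ] (M : Matrix (ι × κ) (ι × κ) ℂ) :
    Matrix ι ι ℂ :=
  fun i i' => ∑ k, M (i, k) (i', k)

/-- The natural identification `⨂ⱼ (Xⱼ ⊗ Yⱼ) ≃ (⨂ⱼ Xⱼ) ⊗ (⨂ⱼ Yⱼ)` on index sets. -/
def piProd {m : ℕ} (ι κ : Fin m → Type*) : (∀ j, ι j × κ j) ≃ (∀ j, ι j) × (∀ j, κ j) where
  toFun f := (fun j => (f j).1, fun j => (f j).2)
  invFun p := fun j => (p.1 j, p.2 j)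
  left_inv _ := rfl
  right_inv _ := rfl

open Matrix

lemma trace_mul_reindex_symm {R n n' : Type*} [NonUnitalNonAssocSemiring R] [Fintype n]
    [Fintype n'] (e : n ≃ n') (A : Matrix n n R) (B : Matrix n' n' R) :
    (A * reindex e.symm e.symm B).trace = (reindex e e A * B).trace := by
  simp only [trace, diag, mul_apply, reindex_apply, submatrix_apply, Equiv.symm_symm]
  rw [← e.symm.sum_comp]
  refine Finset.sum_congr rfl fun i _ => ?_
  rw [← e.sum_comp]
  simp only [Equiv.apply_symm_apply, Equiv.symm_apply_apply]

section PartialTrace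

variable {α β : Type*} [Fintype β]

@[simp]
lemma ptraceY_add (M N : Matrix (α × β) (α × β) ℂ) :
    ptraceY (M + N) = ptraceY M + ptraceY N := by
  ext a b
  simp [ptraceY, Finset.sum_add_distrib]

@[simp]
lemma ptraceY_zero : ptraceY (0 : Matrix (α × β) (α × β) ℂ) = 0 := by
  ext a b
  simp [ptraceY]

lemma ptraceY_eq_sum_submatrix (M : Matrix (α × β) (α × β) ℂ) :
    ptraceY M = ∑ k, M.submatrix (·, k) (·, k) := by
  ext a b
  simp [ptraceY, Matrix.sum_apply]

lemma posSemidef_ptraceY {M : Matrix (α × β) (α × β) ℂ} (hM : M.PosSemidef) :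
    (ptraceY M).PosSemidef := by
  rw [ptraceY_eq_sum_submatrix]
  exact posSemidef_sum _ fun k _ => hM.submatrix _

variable [Fintype α]

lemma trace_mul_kronecker_one [DecidableEq β] (M : Matrix (α × β) (α × β) ℂ) (W : Matrix α α ℂ) :
    (M * (W ⊗ₖ 1)).trace = (ptraceY M * W).trace := by
  simp only [trace, diag, ptraceY, mul_apply, kroneckerMap_apply, Fintype.sum_prod_type, one_apply,
    mul_ite, mul_one, mul_zero, Finset.sum_ite_eq', Finset.mem_univ, if_true, Finset.sum_mul]
  exact Finset.sum_congr rfl fun a _ => Finset.sum_comm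

variable [DecidableEq α]

lemma ptraceY_mul_one_kronecker_comm (M : Matrix (α × β) (α × β) ℂ) (N : Matrix β β ℂ) :
    ptraceY (M * (1 ⊗ₖ N)) = ptraceY ((1 ⊗ₖ N) * M) := by
  ext a b
  simp only [ptraceY, mul_apply, kroneckerMap_apply, one_apply, mul_comm, mul_ite, mul_one,
    mul_zero, ite_mul, zero_mul, Fintype.sum_prod_type, Finset.sum_ite_irrel, Finset.sum_const_zero,
    Finset.sum_ite_eq', Finset.mem_univ, ↓reduceIte, Finset.sum_ite_eq]
  exact Finset.sum_comm

lemma posSemidef_ptraceY_mul_one_kronecker {A : Matrix (α × β) (α × β) ℂ} {B : Matrix β β ℂ}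
    (hA : A.PosSemidef) (hB : B.PosSemidef) : (ptraceY (A * (1 ⊗ₖ B))).PosSemidef := by
  classical
  open scoped MatrixOrder Matrix.Norms.L2Operator in
  obtain ⟨D, rfl⟩ := CStarAlgebra.nonneg_iff_eq_star_mul_self.mp hB.nonneg
  have h : (1 : Matrix α α ℂ) ⊗ₖ (star D * D) = (1 ⊗ₖ D)ᴴ * (1 ⊗ₖ D) := by
    rw [conjTranspose_kronecker, conjTranspose_one, ← mul_kronecker_mul, one_mul,
      star_eq_conjTranspose]
  rw [h, ← Matrix.mul_assoc, ptraceY_mul_one_kronecker_comm, ← Matrix.mul_assoc]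
  exact posSemidef_ptraceY (hA.mul_mul_conjTranspose_same _)

lemma trace_mul_kronecker (S : Matrix (α × β) (α × β) ℂ) (W : Matrix α α ℂ) (C : Matrix β β ℂ) :
    (S * (W ⊗ₖ C)).trace = (ptraceY (S * (1 ⊗ₖ C)) * W).trace := by
  classical
  rw [← trace_mul_kronecker_one, Matrix.mul_assoc, ← mul_kronecker_mul, one_mul, mul_one]

end PartialTrace

section FamTensor

variable {m : ℕ} {ι κ : Fin m → Type*} [∀ j, Fintype (ι j)] [∀ j, Fintype (κ j)]

lemma famTensor_mul (M N : ∀ j, Matrix (ι j) (ι j) ℂ) :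
    famTensor M * famTensor N = famTensor fun j => M j * N j := by
  ext x y
  simp only [famTensor, mul_apply, Fintype.prod_sum, Finset.prod_mul_distrib]

lemma famTensor_one [∀ j, DecidableEq (ι j)] :
    famTensor (fun j => (1 : Matrix (ι j) (ι j) ℂ)) = 1 := by
  ext x y
  simp [famTensor, one_apply, Finset.prod_ite_zero, funext_iff]

lemma reindex_famTensor_kronecker (A : ∀ j, Matrix (ι j) (ι j) ℂ) (B : ∀ j, Matrix (κ j) (κ j) ℂ) :
    reindex (piProd ι κ) (piProd ι κ) (famTensor fun j => A j ⊗ₖ B j) =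
      famTensor A ⊗ₖ famTensor B := by
  ext x y
  simp [famTensor, piProd, Finset.prod_mul_distrib]

lemma ptraceY_reindex_famTensor (M : ∀ j, Matrix (ι j × κ j) (ι j × κ j) ℂ) :
    ptraceY (reindex (piProd ι κ) (piProd ι κ) (famTensor M)) =
      famTensor fun j => ptraceY (M j) := by
  ext x y
  simp only [ptraceY, piProd, reindex_apply, Equiv.symm_mk, Equiv.coe_fn_mk, submatrix_apply,
    famTensor, Finset.prod_univ_sum, Fintype.piFinset_univ]

lemma ptraceY_reindex_famTensor_mul_one_kronecker [∀ j, DecidableEq (ι j)]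
    (P : ∀ j, Matrix (ι j × κ j) (ι j × κ j) ℂ) (Q : ∀ j, Matrix (κ j) (κ j) ℂ) :
    ptraceY (reindex (piProd ι κ) (piProd ι κ) (famTensor P) * (1 ⊗ₖ famTensor Q)) =
      famTensor fun j => ptraceY (P j * (1 ⊗ₖ Q j)) := by
  rw [← famTensor_one, ← reindex_famTensor_kronecker, reindex_apply, reindex_apply,
    submatrix_mul_equiv, famTensor_mul, ← reindex_apply, ptraceY_reindex_famTensor]

end FamTensor

section FullySeparable

variable {m : ℕ} {ι : Fin m → Type*} [∀ j, Fintype (ι j)]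

lemma isFullySep_zero : IsFullySep (0 : Matrix (∀ j, ι j) (∀ j, ι j) ℂ) :=
  ⟨0, Fin.elim0, fun i => i.elim0, by simp⟩

lemma isFullySep_famTensor {P : ∀ j, Matrix (ι j) (ι j) ℂ} (hP : ∀ j, (P j).PosSemidef) :
    IsFullySep (famTensor P) :=
  ⟨1, fun _ => P, fun _ => hP, by simp⟩

lemma IsFullySep.add {A B : Matrix (∀ j, ι j) (∀ j, ι j) ℂ} (hA : IsFullySep A)
    (hB : IsFullySep B) : IsFullySep (A + B) := by
  obtain ⟨k, P, hP, rfl⟩ := hA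
  obtain ⟨l, Q, hQ, rfl⟩ := hB
  exact ⟨k + l, Fin.append P Q, Fin.addCases (by simpa using hP) (by simpa using hQ),
    by simp [Fin.sum_univ_add]⟩

@[elab_as_elim]
lemma IsFullySep.induction_on {p : Matrix (∀ j, ι j) (∀ j, ι j) ℂ → Prop}
    {A : Matrix (∀ j, ι j) (∀ j, ι j) ℂ} (hA : IsFullySep A) (zero : p 0)
    (product : ∀ P : ∀ j, Matrix (ι j) (ι j) ℂ, (∀ j, (P j).PosSemidef) → p (famTensor P))
    (add : ∀ A B, p A → p B → p (A + B)) : p A := by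
  obtain ⟨k, P, hP, rfl⟩ := hA
  exact Finset.sum_induction _ p add zero fun i _ => product (P i) (hP i)

end FullySeparable

lemma IsFullySep.ptraceY_reindex_mul_one_kronecker {m : ℕ} {ι κ : Fin m → Type*}
    [∀ j, Fintype (ι j)] [∀ j, Fintype (κ j)] [∀ j, DecidableEq (ι j)]
    {S : Matrix (∀ j, ι j × κ j) (∀ j, ι j × κ j) ℂ} {C : Matrix (∀ j, κ j) (∀ j, κ j) ℂ}
    (hS : IsFullySep S) (hC : IsFullySep C) :
    IsFullySep (ptraceY (reindex (piProd ι κ) (piProd ι κ) S * (1 ⊗ₖ C))) := by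
  refine hS.induction_on (by simpa using isFullySep_zero) (fun P hP => ?_)
    fun A B hA hB => by simpa [submatrix_add, add_mul] using hA.add hB
  refine hC.induction_on (by simpa using isFullySep_zero) (fun Q hQ => ?_)
    fun A B hA hB => by simpa [kronecker_add, mul_add] using hA.add hB
  rw [ptraceY_reindex_famTensor_mul_one_kronecker]
  exact isFullySep_famTensor fun j => posSemidef_ptraceY_mul_one_kronecker (hP j) (hQ j)

/-- If `W ∈ Sep(X₁,…,X_m)*` and `C ∈ Sep(Y₁,…,Y_m)`, then `W ⊗ C` belongs to
`Sep(X₁⊗Y₁,…,X_m⊗Y_m)*`. -/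
theorem sepDual_kron_sep_mem_sepDual {m : ℕ} {ι κ : Fin m → Type}
    [∀ j, Fintype (ι j)] [∀ j, Fintype (κ j)]
    (W : Matrix (∀ j, ι j) (∀ j, ι j) ℂ) (C : Matrix (∀ j, κ j) (∀ j, κ j) ℂ)
    (hW : InSepDual W) (hC : IsFullySep C) :
    InSepDual (ι := fun j => ι j × κ j)
      (Matrix.reindex (piProd ι κ).symm (piProd ι κ).symm (W ⊗ₖ C)) := by
  classical
  intro S hS
  rw [trace_mul_reindex_symm, trace_mul_kronecker]
  exact hW _ (hS.ptraceY_reindex_mul_one_kronecker hC)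
end

section
/- The two-qubit operator C = ½|00⟩⟨00| + ½|Ψ⁺⟩⟨Ψ⁺|, where |Ψ⁺⟩ = (|01⟩+|10⟩)/√2, is not a separable operator: it cannot be written as a finite sum Σᵢ ρᵢ⊗σᵢ with all ρᵢ, σᵢ positive semidefinite on ℂ². -/
open scoped Kronecker ComplexOrder

/-- The basis state `|00⟩` of two qubits. -/
noncomputable def ket00 : Fin 2 × Fin 2 → ℂ := fun p => if p = (0, 0) then 1 else 0

/-- The Bell state `|Ψ⁺⟩ = (|01⟩ + |10⟩)/√2`. -/
noncomputable def ketPsiPlus : Fin 2 × Fin 2 → ℂ := fun p =>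
  if p = (0, 1) ∨ p = (1, 0) then (1 / Real.sqrt 2 : ℝ) else 0

/-- The two-qubit operator `C = ½|00⟩⟨00| + ½|Ψ⁺⟩⟨Ψ⁺|`. -/
noncomputable def Cop : Matrix (Fin 2 × Fin 2) (Fin 2 × Fin 2) ℂ :=
  (1 / 2 : ℂ) • Matrix.vecMulVec ket00 (star ket00) +
    (1 / 2 : ℂ) • Matrix.vecMulVec ketPsiPlus (star ketPsiPlus)

/-!
Each term `ρ ⊗ₖ σ` of a separable decomposition has nonnegative diagonal entries `ρ j j * σ l l`,
so a vanishing diagonal entry of a separable operator forces `ρ j j = 0` or `σ l l = 0` in every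
term. Positivity then kills column `j` of `ρ` or row `l` of `σ`, hence every entry
`M (x, l) (j, y)`. For `C` the diagonal entry at `|11⟩` vanishes, but `⟨01|C|10⟩ = 1/4`.
-/

namespace Matrix

variable {𝕜 : Type*} [RCLike 𝕜] {m n : Type*} [Fintype m] [Fintype n]

def IsSeparable (M : Matrix (m × n) (m × n) 𝕜) : Prop :=
  ∃ (k : ℕ) (ρ : Fin k → Matrix m m 𝕜) (σ : Fin k → Matrix n n 𝕜),
    (∀ i, (ρ i).PosSemidef) ∧ (∀ i, (σ i).PosSemidef) ∧ M = ∑ i, ρ i ⊗ₖ σ i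

namespace PosSemidef

variable [DecidableEq n] {A : Matrix n n 𝕜}

theorem apply_eq_zero_of_apply_self_eq_zero_right (hA : A.PosSemidef) {j : n} (h : A j j = 0)
    (i : n) : A i j = 0 := by
  have hcol : A *ᵥ Pi.single j 1 = 0 :=
    (hA.dotProduct_mulVec_zero_iff _).mp (by simpa using h)
  simpa using congrFun hcol i

theorem apply_eq_zero_of_apply_self_eq_zero_left (hA : A.PosSemidef) {j : n} (h : A j j = 0)
    (i : n) : A j i = 0 := by
  rw [← hA.isHermitian.apply, hA.apply_eq_zero_of_apply_self_eq_zero_right h, star_zero]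

end PosSemidef

variable [DecidableEq m] [DecidableEq n]

theorem PosSemidef.mul_apply_eq_zero_of_mul_apply_self_eq_zero {ρ : Matrix m m 𝕜}
    {σ : Matrix n n 𝕜} (hρ : ρ.PosSemidef) (hσ : σ.PosSemidef) {j : m} {l : n}
    (h : ρ j j * σ l l = 0) (x : m) (y : n) : ρ x j * σ l y = 0 := by
  rcases mul_eq_zero.mp h with hρj | hσl
  · rw [hρ.apply_eq_zero_of_apply_self_eq_zero_right hρj, zero_mul]
  · rw [hσ.apply_eq_zero_of_apply_self_eq_zero_left hσl, mul_zero]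

theorem IsSeparable.apply_eq_zero_of_apply_self_eq_zero {M : Matrix (m × n) (m × n) 𝕜}
    (hM : M.IsSeparable) {j : m} {l : n} (h : M (j, l) (j, l) = 0) (x : m) (y : n) :
    M (x, l) (j, y) = 0 := by
  obtain ⟨k, ρ, σ, hρ, hσ, rfl⟩ := hM
  simp only [sum_apply, kroneckerMap_apply] at h ⊢
  have hterm := (Finset.sum_eq_zero_iff_of_nonneg fun i _ ↦
    mul_nonneg (hρ i).diag_nonneg (hσ i).diag_nonneg).mp h
  exact Finset.sum_eq_zero fun i hi ↦
    (hρ i).mul_apply_eq_zero_of_mul_apply_self_eq_zero (hσ i) (hterm i hi) x y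

end Matrix

theorem Cop_apply_11_11 : Cop (1, 1) (1, 1) = 0 := by
  simp [Cop, ket00, ketPsiPlus, Matrix.vecMulVec_apply]

theorem Cop_apply_01_10 : Cop (0, 1) (1, 0) = 1 / 4 := by
  have hsqrt : ((Real.sqrt 2 : ℂ))⁻¹ * ((Real.sqrt 2 : ℂ))⁻¹ = 1 / 2 := by
    rw [← mul_inv, ← Complex.ofReal_mul, Real.mul_self_sqrt zero_le_two]
    norm_num
  norm_num [Cop, ket00, ketPsiPlus, Matrix.vecMulVec_apply, hsqrt]

/-- `C = ½|00⟩⟨00| + ½|Ψ⁺⟩⟨Ψ⁺|` is not a separable operator. -/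
theorem Cop_not_separable :
    ¬ ∃ (k : ℕ) (ρ σ : Fin k → Matrix (Fin 2) (Fin 2) ℂ),
        (∀ i, (ρ i).PosSemidef) ∧ (∀ i, (σ i).PosSemidef) ∧
        Cop = ∑ i, ρ i ⊗ₖ σ i := by
  intro hC
  have h := Matrix.IsSeparable.apply_eq_zero_of_apply_self_eq_zero hC Cop_apply_11_11 0 0
  rw [Cop_apply_01_10] at h
  norm_num at h
end
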